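/- (Modulational expansion of the coefficient II.) Let g > 0, k₀ > 0, and χⱼ = (λⱼ, μⱼ) ∈ ℝ², j = 1,…,4, be fixed with χ₁ + χ₂ = χ₃ + χ₄ and χ₁ ≠ χ₃. Substitute k₁ = (k₀,0)+εχ₁, k₂ = (k₀,0)+εχ₂, k₃ = −((k₀,0)+εχ₃), k₄ = −((k₀,0)+εχ₄) into the coefficient II(k₁,k₂,k₃,k₄). Then, as ε → 0⁺, II = ε·(k₀²/(4π²))·(λ₁−λ₃)²/‖χ₁−χ₃‖ + O(ε^{3/2}). -/

import Mathlib

/-!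
Put `p = (k₀, 0)` and `δ = χ₁ - χ₃ = χ₄ - χ₂`, so that `k₁ + k₃ = ε • δ = -(k₂ + k₄)`. Since `ℓ`
and `ω` are positively homogeneous of degree `1/2`, each of the five factors of `II` (the
amplitude, the two `ℓ`-brackets and the two resonance denominators) is `√ε` times a function
that converges at rate `O(√ε)`. The only non-homogeneous term of a bracket, `ℓ_{k₁}^{k₃}` with
`k₁ ≈ -k₃`, is `O(ε²)` because `2 (‖a‖‖b‖ - a·b) ≤ ‖a - b‖²`; the frequency mismatch
`ω(k₁) - ω(k₃)` is `O(ε)` because `ω` is smooth away from the origin. Hence `II = ε Φ(ε)` with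
`Φ(ε) = Φ(0) + O(√ε)`, and `Φ(0) = k₀² (λ₁ - λ₃)² / (4π² ‖δ‖)`.
-/

open Asymptotics Filter Topology

/-- Euclidean norm on ℝ². -/
noncomputable def norm2 (k : ℝ × ℝ) : ℝ := Real.sqrt (k.1 ^ 2 + k.2 ^ 2)

/-- Euclidean inner product on ℝ². -/
def dot (a b : ℝ × ℝ) : ℝ := a.1 * b.1 + a.2 * b.2

/-- Deep-water dispersion relation ω(k) = √(g‖k‖). -/
noncomputable def omg (g : ℝ) (k : ℝ × ℝ) : ℝ := Real.sqrt (g * norm2 k)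

/-- ℓ_a^b = (‖a‖‖b‖ + a·b)/√(‖a‖‖b‖). -/
noncomputable def ell (a b : ℝ × ℝ) : ℝ :=
  (norm2 a * norm2 b + dot a b) / Real.sqrt (norm2 a * norm2 b)

/-- The coefficient II of Proposition 4.3. -/
noncomputable def coefII (g : ℝ) (k₁ k₂ k₃ k₄ : ℝ × ℝ) : ℝ :=
  Real.sqrt g / (32 * Real.pi ^ 2) *
    (norm2 k₁ * norm2 k₂ * norm2 k₃ * norm2 k₄ * norm2 (k₁ + k₃) * norm2 (k₂ + k₄)) ^
      ((1 : ℝ) / 4) *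
    (ell k₁ k₃ + ell (k₁ + k₃) (-k₃) - ell (k₁ + k₃) (-k₁)) *
    (ell k₄ k₂ + ell (k₂ + k₄) (-k₂) - ell (k₂ + k₄) (-k₄)) *
    (1 / (omg g k₁ + omg g (k₁ + k₃) - omg g k₃)
      + 1 / (omg g k₄ + omg g (k₂ + k₄) - omg g k₂))

lemma sq_norm2 (x : ℝ × ℝ) : norm2 x ^ 2 = x.1 ^ 2 + x.2 ^ 2 := Real.sq_sqrt (by positivity)

lemma norm2_pos {x : ℝ × ℝ} (hx : x ≠ 0) : 0 < norm2 x := by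
  refine Real.sqrt_pos.mpr ?_
  rcases x with ⟨x₁, x₂⟩
  have : x₁ ≠ 0 ∨ x₂ ≠ 0 := by
    by_contra! h
    exact hx (by simp [h])
  rcases this with h | h <;> positivity

lemma norm2_neg (x : ℝ × ℝ) : norm2 (-x) = norm2 x := by simp [norm2]

lemma norm2_smul (t : ℝ) (x : ℝ × ℝ) : norm2 (t • x) = |t| * norm2 x := by
  rw [norm2, norm2, ← Real.sqrt_sq_eq_abs, ← Real.sqrt_mul (sq_nonneg _)]
  simp only [Prod.smul_fst, Prod.smul_snd, smul_eq_mul]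
  ring_nf

lemma continuous_norm2 : Continuous norm2 := by unfold norm2; fun_prop

lemma dot_neg_right (a b : ℝ × ℝ) : dot a (-b) = -dot a b := by simp [dot]; ring

lemma dot_le_norm2_mul_norm2 (a b : ℝ × ℝ) : dot a b ≤ norm2 a * norm2 b := by
  rw [norm2, norm2, ← Real.sqrt_mul (by positivity)]
  refine Real.le_sqrt_of_sq_le ?_
  unfold dot
  nlinarith [sq_nonneg (a.1 * b.2 - a.2 * b.1)]

lemma two_mul_sub_dot_le (a b : ℝ × ℝ) :
    2 * (norm2 a * norm2 b - dot a b) ≤ norm2 (a - b) ^ 2 := by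
  have h : norm2 (a - b) ^ 2 = norm2 a ^ 2 + norm2 b ^ 2 - 2 * dot a b := by
    simp only [sq_norm2, dot, Prod.fst_sub, Prod.snd_sub]; ring
  nlinarith [sq_nonneg (norm2 a - norm2 b)]

lemma ell_neg_neg (a b : ℝ × ℝ) : ell (-a) (-b) = ell a b := by
  simp [ell, norm2_neg, dot]

lemma ell_neg_left (a b : ℝ × ℝ) : ell (-a) b = ell a (-b) := by
  rw [← ell_neg_neg, neg_neg]

lemma ell_neg_right (a b : ℝ × ℝ) :
    ell a (-b) = (norm2 a * norm2 b - dot a b) / √(norm2 a * norm2 b) := by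
  rw [ell, norm2_neg, dot_neg_right, sub_eq_add_neg]

lemma ell_sub_ell_neg (a b : ℝ × ℝ) :
    ell a b - ell a (-b) = 2 * dot a b / √(norm2 a * norm2 b) := by
  rw [ell_neg_right, ell]; ring

lemma ell_smul_left {t : ℝ} (ht : 0 ≤ t) (a b : ℝ × ℝ) : ell (t • a) b = √t * ell a b := by
  have hdot : dot (t • a) b = t * dot a b := by
    simp only [dot, Prod.smul_fst, Prod.smul_snd, smul_eq_mul]; ring
  rw [ell, ell, norm2_smul, abs_of_nonneg ht, hdot, mul_assoc, Real.sqrt_mul ht, ← mul_add]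
  rcases ht.eq_or_lt with rfl | ht
  · simp
  · nth_rewrite 1 [← Real.mul_self_sqrt ht.le]
    rw [mul_assoc, mul_div_mul_left _ _ (Real.sqrt_pos.mpr ht).ne', mul_div_assoc]

lemma omg_neg (g : ℝ) (x : ℝ × ℝ) : omg g (-x) = omg g x := by rw [omg, omg, norm2_neg]

lemma omg_smul (g : ℝ) {t : ℝ} (ht : 0 ≤ t) (x : ℝ × ℝ) : omg g (t • x) = √t * omg g x := by
  rw [omg, omg, norm2_smul, abs_of_nonneg ht, mul_left_comm, Real.sqrt_mul ht]

section Differentiability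

variable {E : Type*} [NormedAddCommGroup E] [NormedSpace ℝ E] {c d : E → ℝ × ℝ} {x : E}

lemma DifferentiableAt.norm2 (hc : DifferentiableAt ℝ c x) (h : c x ≠ 0) :
    DifferentiableAt ℝ (fun y => norm2 (c y)) x := by
  have hpos := norm2_pos h
  refine DifferentiableAt.sqrt (by fun_prop) ?_
  rw [← sq_norm2]
  positivity

lemma DifferentiableAt.ell (hc : DifferentiableAt ℝ c x) (hd : DifferentiableAt ℝ d x)
    (hc0 : c x ≠ 0) (hd0 : d x ≠ 0) : DifferentiableAt ℝ (fun y => ell (c y) (d y)) x := by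
  have hpos : 0 < _root_.norm2 (c x) * _root_.norm2 (d x) :=
    mul_pos (norm2_pos hc0) (norm2_pos hd0)
  have hnc := hc.norm2 hc0
  have hnd := hd.norm2 hd0
  have hdot : DifferentiableAt ℝ (fun y => dot (c y) (d y)) x := by unfold dot; fun_prop
  have hsqrt : DifferentiableAt ℝ (fun y => √(_root_.norm2 (c y) * _root_.norm2 (d y))) x :=
    DifferentiableAt.sqrt (by fun_prop) hpos.ne'
  simp only [_root_.ell, div_eq_mul_inv]
  exact DifferentiableAt.fun_mul (by fun_prop) (hsqrt.fun_inv (Real.sqrt_pos.mpr hpos).ne')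

lemma DifferentiableAt.omg {g : ℝ} (hg : g ≠ 0) (hc : DifferentiableAt ℝ c x) (h : c x ≠ 0) :
    DifferentiableAt ℝ (fun y => omg g (c y)) x := by
  have hpos := norm2_pos h
  have hnc := hc.norm2 h
  unfold _root_.omg
  exact (hnc.const_mul g).sqrt (mul_ne_zero hg hpos.ne')

end Differentiability

lemma DifferentiableAt.isBigO_comp_sub {α E F : Type*} [NormedAddCommGroup E]
    [NormedSpace ℝ E] [NormedAddCommGroup F] [NormedSpace ℝ F] {l : Filter α} {r : α → ℝ}
    {φ : E → F} {x₀ : E} (hφ : DifferentiableAt ℝ φ x₀) {X : α → E}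
    (hX : (fun t => X t - x₀) =O[l] r) (hr : Tendsto r l (𝓝 0)) :
    (fun t => φ (X t) - φ x₀) =O[l] r := by
  have hXt : Tendsto X l (𝓝 x₀) := by
    simpa using (hX.trans_tendsto hr).add_const x₀
  exact (hφ.isBigO_sub.comp_tendsto hXt).trans hX

lemma isBigO_id_sqrt : (fun ε : ℝ => ε) =O[𝓝[>] 0] Real.sqrt := by
  refine IsBigO.of_bound 1 ?_
  filter_upwards [Ioo_mem_nhdsGT (show (0 : ℝ) < 1 by norm_num)] with ε ⟨hε0, hε1⟩
  rw [Real.norm_of_nonneg hε0.le, Real.norm_of_nonneg (Real.sqrt_nonneg _), one_mul]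
  calc ε = √ε * √ε := (Real.mul_self_sqrt hε0.le).symm
    _ ≤ √ε * 1 := by gcongr; exact Real.sqrt_le_one.mpr hε1.le
    _ = √ε := mul_one _

lemma DifferentiableAt.isBigO_sub_sqrt {f : ℝ → ℝ} (hf : DifferentiableAt ℝ f 0) :
    (fun ε => f ε - f 0) =O[𝓝[>] 0] Real.sqrt := by
  have h := hf.isBigO_sub.mono (nhdsWithin_le_nhds (s := Set.Ioi 0))
  simp only [sub_zero] at h
  exact h.trans isBigO_id_sqrt

lemma Asymptotics.IsBigO.div_sqrt {f : ℝ → ℝ} (hf : f =O[𝓝[>] 0] fun ε => ε) :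
    (fun ε => f ε / √ε) =O[𝓝[>] 0] Real.sqrt := by
  refine (hf.mul (isBigO_refl (fun ε => (√ε)⁻¹) _)).congr' (Eventually.of_forall fun ε => ?_) ?_
  · simp only [div_eq_mul_inv]
  · filter_upwards with ε
    rw [← div_eq_mul_inv, Real.div_sqrt]

lemma isBigO_ell_neg_right {α : Type*} {l : Filter α} {a b : α → ℝ × ℝ} {x y : ℝ × ℝ}
    (ha : Tendsto a l (𝓝 x)) (hb : Tendsto b l (𝓝 y)) (hx : x ≠ 0) (hy : y ≠ 0) :
    (fun t => ell (a t) (-b t)) =O[l] fun t => norm2 (a t - b t) ^ 2 := by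
  have hnum : (fun t => norm2 (a t) * norm2 (b t) - dot (a t) (b t))
      =O[l] fun t => norm2 (a t - b t) ^ 2 := by
    refine IsBigO.of_bound 1 (Eventually.of_forall fun t => ?_)
    rw [Real.norm_of_nonneg (sub_nonneg.2 (dot_le_norm2_mul_norm2 _ _)),
      Real.norm_of_nonneg (sq_nonneg _)]
    linarith [two_mul_sub_dot_le (a t) (b t), sq_nonneg (norm2 (a t - b t))]
  have hden : Tendsto (fun t => (√(norm2 (a t) * norm2 (b t)))⁻¹) l
      (𝓝 (√(norm2 x * norm2 y))⁻¹) := by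
    have hpos := Real.sqrt_pos.mpr (mul_pos (norm2_pos hx) (norm2_pos hy))
    exact (((continuous_norm2.tendsto x).comp ha).mul ((continuous_norm2.tendsto y).comp hb)
      |>.sqrt).inv₀ hpos.ne'
  simpa only [ell_neg_right, div_eq_mul_inv, mul_one] using hnum.mul (hden.isBigO_one ℝ)

noncomputable def ellSum (a b : ℝ × ℝ) : ℝ := ell a (-b) + ell (a - b) b - ell (a - b) (-a)

noncomputable def resonance (g : ℝ) (a b : ℝ × ℝ) : ℝ := omg g a + omg g (a - b) - omg g b

lemma ellSum_of_sub_eq_smul {a b δ : ℝ × ℝ} {t : ℝ} (ht : 0 ≤ t) (h : a - b = t • δ) :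
    ellSum a b = ell a (-b) + √t * (ell δ b - ell δ (-a)) := by
  rw [ellSum, h, ell_smul_left ht, ell_smul_left ht]; ring

lemma resonance_of_sub_eq_smul (g : ℝ) {a b δ : ℝ × ℝ} {t : ℝ} (ht : 0 ≤ t) (h : a - b = t • δ) :
    resonance g a b = omg g a - omg g b + √t * omg g δ := by
  rw [resonance, h, omg_smul g ht]; ring

lemma isBigO_ellSum_div_sqrt {p : ℝ × ℝ} (hp : p ≠ 0) {χ χ' : ℝ × ℝ} (hχ : χ ≠ χ') :
    (fun ε => ellSum (p + ε • χ) (p + ε • χ') / √ε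
        - 2 * dot (χ - χ') p / √(norm2 (χ - χ') * norm2 p)) =O[𝓝[>] 0] Real.sqrt := by
  have hsub : ∀ ε : ℝ, p + ε • χ - (p + ε • χ') = ε • (χ - χ') := fun ε => by
    rw [smul_sub]; abel
  have hline : ∀ χ : ℝ × ℝ, DifferentiableAt ℝ (fun ε : ℝ => p + ε • χ) 0 := fun χ => by
    fun_prop
  have hantipodal : (fun ε : ℝ => ell (p + ε • χ) (-(p + ε • χ'))) =O[𝓝[>] 0] fun ε : ℝ => ε := by
    have h := isBigO_ell_neg_right (l := 𝓝 (0 : ℝ))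
      (by simpa using (hline χ).continuousAt.tendsto)
      (by simpa using (hline χ').continuousAt.tendsto) hp hp
    have hsq : ∀ ε : ℝ, norm2 (ε • (χ - χ')) ^ 2 = norm2 (χ - χ') ^ 2 * ε ^ 2 := fun ε => by
      rw [norm2_smul, mul_pow, sq_abs, mul_comm]
    simp only [hsub, hsq] at h
    exact (h.trans ((isLittleO_pow_id one_lt_two).isBigO.const_mul_left _)).mono
      nhdsWithin_le_nhds
  have hrest : DifferentiableAt ℝ
      (fun ε : ℝ => ell (χ - χ') (p + ε • χ') - ell (χ - χ') (-(p + ε • χ))) 0 := by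
    have hδ : χ - χ' ≠ 0 := sub_ne_zero.mpr hχ
    exact ((differentiableAt_const _).ell (hline χ') hδ (by simpa using hp)).sub
      ((differentiableAt_const _).ell (hline χ).neg hδ (by simpa using hp))
  refine (hantipodal.div_sqrt.add hrest.isBigO_sub_sqrt).congr' ?_ EventuallyEq.rfl
  filter_upwards [self_mem_nhdsWithin] with ε (hε : 0 < ε)
  rw [ellSum_of_sub_eq_smul hε.le (hsub ε), add_div,
    mul_div_cancel_left₀ _ (Real.sqrt_pos.mpr hε).ne']
  simp only [zero_smul, add_zero, ell_sub_ell_neg]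
  ring

lemma isBigO_resonance_div_sqrt {g : ℝ} (hg : g ≠ 0) {p : ℝ × ℝ} (hp : p ≠ 0) (χ χ' : ℝ × ℝ) :
    (fun ε => resonance g (p + ε • χ) (p + ε • χ') / √ε - omg g (χ - χ'))
      =O[𝓝[>] 0] Real.sqrt := by
  have hsub : ∀ ε : ℝ, p + ε • χ - (p + ε • χ') = ε • (χ - χ') := fun ε => by
    rw [smul_sub]; abel
  have hdiff : DifferentiableAt ℝ (fun ε : ℝ => omg g (p + ε • χ) - omg g (p + ε • χ')) 0 :=
    (DifferentiableAt.omg hg (by fun_prop) (by simpa using hp)).sub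
      (DifferentiableAt.omg hg (by fun_prop) (by simpa using hp))
  have h := hdiff.isBigO_sub.mono (nhdsWithin_le_nhds (s := Set.Ioi 0))
  simp only [zero_smul, add_zero, sub_self, sub_zero] at h
  refine h.div_sqrt.congr' ?_ EventuallyEq.rfl
  filter_upwards [self_mem_nhdsWithin] with ε (hε : 0 < ε)
  rw [resonance_of_sub_eq_smul g hε.le (hsub ε), add_div,
    mul_div_cancel_left₀ _ (Real.sqrt_pos.mpr hε).ne']
  ring

noncomputable def coefIIOfFactors (g A T T' R R' : ℝ) : ℝ :=
  √g / (32 * Real.pi ^ 2) * A * T * T' * (1 / R + 1 / R')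

lemma coefIIOfFactors_mul_left (g s A T T' R R' : ℝ) :
    coefIIOfFactors g (s * A) T T' R R'
      = s ^ 2 * coefIIOfFactors g A (T / s) (T' / s) (R / s) (R' / s) := by
  rcases eq_or_ne s 0 with rfl | hs
  · simp [coefIIOfFactors]
  · simp only [coefIIOfFactors, one_div, inv_div]
    field_simp

lemma coefII_neg_neg (g : ℝ) (a b a' b' : ℝ × ℝ) :
    coefII g a b' (-b) (-a') = coefIIOfFactors g
      ((norm2 a * norm2 b' * norm2 b * norm2 a' * norm2 (a - b) * norm2 (a' - b')) ^ (1 / 4 : ℝ))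
      (ellSum a b) (ellSum a' b') (resonance g a b) (resonance g a' b') := by
  have h : b' + -a' = -(a' - b') := by abel
  simp only [coefII, coefIIOfFactors, ellSum, resonance, ← sub_eq_add_neg, h, norm2_neg,
    omg_neg, neg_neg, ell_neg_left]

lemma mul_sq_rpow_quarter {P t : ℝ} (hP : 0 ≤ P) (ht : 0 ≤ t) (n : ℝ) :
    (P * (t * n) * (t * n)) ^ (1 / 4 : ℝ) = √t * (P * n ^ 2) ^ (1 / 4 : ℝ) := by
  rw [show P * (t * n) * (t * n) = t ^ 2 * (P * n ^ 2) by ring,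
    Real.mul_rpow (sq_nonneg t) (by positivity), Real.sqrt_eq_rpow, ← Real.rpow_natCast,
    ← Real.rpow_mul ht]
  norm_num

lemma coefII_modulational_eq (g : ℝ) (p : ℝ × ℝ) {χ₁ χ₂ χ₃ χ₄ : ℝ × ℝ}
    (hχ : χ₁ + χ₂ = χ₃ + χ₄) {ε : ℝ} (hε : 0 < ε) :
    coefII g (p + ε • χ₁) (p + ε • χ₂) (-(p + ε • χ₃)) (-(p + ε • χ₄))
      = ε * coefIIOfFactors g
        ((norm2 (p + ε • χ₁) * norm2 (p + ε • χ₂) * norm2 (p + ε • χ₃) * norm2 (p + ε • χ₄) *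
          norm2 (χ₁ - χ₃) ^ 2) ^ (1 / 4 : ℝ))
        (ellSum (p + ε • χ₁) (p + ε • χ₃) / √ε) (ellSum (p + ε • χ₄) (p + ε • χ₂) / √ε)
        (resonance g (p + ε • χ₁) (p + ε • χ₃) / √ε)
        (resonance g (p + ε • χ₄) (p + ε • χ₂) / √ε) := by
  have h₁₃ : p + ε • χ₁ - (p + ε • χ₃) = ε • (χ₁ - χ₃) := by rw [smul_sub]; abel
  have h₄₂ : p + ε • χ₄ - (p + ε • χ₂) = ε • (χ₁ - χ₃) := by
    rw [show χ₁ - χ₃ = χ₄ - χ₂ by rw [sub_eq_sub_iff_add_eq_add, hχ, add_comm], smul_sub]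
    abel
  rw [coefII_neg_neg, h₁₃, h₄₂, norm2_smul, abs_of_pos hε,
    mul_sq_rpow_quarter (by unfold norm2; positivity) hε.le, coefIIOfFactors_mul_left,
    Real.sq_sqrt hε.le]

lemma differentiableAt_coefIIOfFactors (g : ℝ) {q : ℝ × ℝ × ℝ × ℝ × ℝ} (hR : q.2.2.2.1 ≠ 0)
    (hR' : q.2.2.2.2 ≠ 0) :
    DifferentiableAt ℝ (fun q : ℝ × ℝ × ℝ × ℝ × ℝ =>
      coefIIOfFactors g q.1 q.2.1 q.2.2.1 q.2.2.2.1 q.2.2.2.2) q := by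
  unfold coefIIOfFactors
  fun_prop (disch := assumption)

lemma differentiableAt_amplitude {p δ : ℝ × ℝ} (hp : p ≠ 0) (hδ : δ ≠ 0)
    (χ₁ χ₂ χ₃ χ₄ : ℝ × ℝ) :
    DifferentiableAt ℝ (fun ε : ℝ => (norm2 (p + ε • χ₁) * norm2 (p + ε • χ₂) *
      norm2 (p + ε • χ₃) * norm2 (p + ε • χ₄) * norm2 δ ^ 2) ^ (1 / 4 : ℝ)) 0 := by
  have hN : ∀ χ : ℝ × ℝ, DifferentiableAt ℝ (fun ε : ℝ => norm2 (p + ε • χ)) 0 := fun χ =>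
    DifferentiableAt.norm2 (by fun_prop) (by simpa using hp)
  refine DifferentiableAt.rpow_const (by fun_prop) (Or.inl ?_)
  have := norm2_pos hp
  have := norm2_pos hδ
  simp only [zero_smul, add_zero]
  positivity

lemma coefIIOfFactors_limit_eq {g k₀ : ℝ} (hg : 0 < g) (hk₀ : 0 < k₀) {δ : ℝ × ℝ} (hδ : δ ≠ 0) :
    coefIIOfFactors g
        ((norm2 (k₀, 0) * norm2 (k₀, 0) * norm2 (k₀, 0) * norm2 (k₀, 0) *
          norm2 δ ^ 2) ^ (1 / 4 : ℝ))
        (2 * dot δ (k₀, 0) / √(norm2 δ * norm2 (k₀, 0)))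
        (2 * dot δ (k₀, 0) / √(norm2 δ * norm2 (k₀, 0))) (omg g δ) (omg g δ)
      = k₀ ^ 2 / (4 * Real.pi ^ 2) * δ.1 ^ 2 / norm2 δ := by
  have hn := norm2_pos hδ
  have hk : norm2 (k₀, 0) = k₀ := by simp [norm2, Real.sqrt_sq hk₀.le]
  have hA : (k₀ * k₀ * k₀ * k₀ * norm2 δ ^ 2) ^ (1 / 4 : ℝ) = k₀ * √(norm2 δ) := by
    rw [show k₀ * k₀ * k₀ * k₀ * norm2 δ ^ 2 = (k₀ * √(norm2 δ)) ^ 4 by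
      rw [mul_pow, show (4 : ℕ) = 2 * 2 from rfl, pow_mul, pow_mul, Real.sq_sqrt hn.le]; ring]
    rw [show (1 / 4 : ℝ) = ((4 : ℕ) : ℝ)⁻¹ by norm_num, Real.pow_rpow_inv_natCast (by positivity)
      (by norm_num)]
  rw [hk, hA, omg, Real.sqrt_mul hg.le, Real.sqrt_mul hn.le]
  simp only [coefIIOfFactors, dot]
  field_simp
  rw [Real.sq_sqrt hn.le, Real.sq_sqrt hk₀.le]
  ring

/-- Modulational expansion of the coefficient II. -/
theorem coefII_modulational_expansion (g k₀ : ℝ) (hg : 0 < g) (hk₀ : 0 < k₀)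
    (χ₁ χ₂ χ₃ χ₄ : ℝ × ℝ) (hχ : χ₁ + χ₂ = χ₃ + χ₄) (hne : χ₁ ≠ χ₃) :
    (fun ε : ℝ =>
        coefII g ((k₀, 0) + ε • χ₁) ((k₀, 0) + ε • χ₂)
            (-((k₀, 0) + ε • χ₃)) (-((k₀, 0) + ε • χ₄))
          - ε * (k₀ ^ 2 / (4 * Real.pi ^ 2)) * (χ₁.1 - χ₃.1) ^ 2 / norm2 (χ₁ - χ₃))
      =O[𝓝[>] (0 : ℝ)] fun ε => ε ^ ((3 : ℝ) / 2) := by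
  have hp : ((k₀, 0) : ℝ × ℝ) ≠ 0 := by simp [hk₀.ne']
  have hδ : χ₄ - χ₂ = χ₁ - χ₃ := by rw [sub_eq_sub_iff_add_eq_add, hχ, add_comm]
  have hne' : χ₄ ≠ χ₂ := by rw [← sub_ne_zero, hδ, sub_ne_zero]; exact hne
  have hW : omg g (χ₁ - χ₃) ≠ 0 :=
    Real.sqrt_ne_zero'.mpr (mul_pos hg (norm2_pos (sub_ne_zero.mpr hne)))
  have hA := (differentiableAt_amplitude hp (sub_ne_zero.mpr hne) χ₁ χ₂ χ₃ χ₄).isBigO_sub_sqrt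
  have hT₁ := isBigO_ellSum_div_sqrt hp hne
  have hT₂ := isBigO_ellSum_div_sqrt hp hne'
  have hR₁ := isBigO_resonance_div_sqrt hg.ne' hp χ₁ χ₃
  have hR₂ := isBigO_resonance_div_sqrt hg.ne' hp χ₄ χ₂
  rw [hδ] at hT₂ hR₂
  have hΦ := (differentiableAt_coefIIOfFactors g
    (q := (_, _, _, omg g (χ₁ - χ₃), omg g (χ₁ - χ₃))) hW hW).isBigO_comp_sub
    (X := fun ε => (_, _, _, _, _))
    (hA.prod_left (hT₁.prod_left (hT₂.prod_left (hR₁.prod_left hR₂))))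
    ((Real.continuous_sqrt.tendsto' 0 0 Real.sqrt_zero).mono_left nhdsWithin_le_nhds)
  refine ((isBigO_refl (fun ε : ℝ => ε) _).mul hΦ).congr' ?_ ?_
  · filter_upwards [self_mem_nhdsWithin] with ε (hε : 0 < ε)
    simp only [zero_smul, add_zero]
    rw [coefII_modulational_eq g _ hχ hε, coefIIOfFactors_limit_eq hg hk₀ (sub_ne_zero.mpr hne),
      Prod.fst_sub]
    ring
  · filter_upwards [self_mem_nhdsWithin] with ε (hε : 0 < ε)
    rw [Real.sqrt_eq_rpow, ← Real.rpow_one_add' hε.le (by norm_num)]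
    norm_num
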